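/- For all integers 0 ≤ r ≤ s, one has Σ_{v=0}^{r} (4^{v} / C(2v,v)) · C(r,v) · C(s−r,v) = C(2s,2r) / C(s,r), as an identity of rational numbers. -/

import Mathlib

/-!
Write `t v = 4 ^ v / C(2v, v)` and `F r m = ∑ v, t v C(r, v) C(m, v)`. Both `F r m` and
`G r m = C(2(r + m), 2r) / C(r + m, r)` equal `1` at `r = 0` and satisfy
`(2r + 1) X (r + 1) m = (2(r + m) + 1) X r m`. For `F` this is Zeilberger's recurrence: after
Pascal's rule `F (r + 1) m - F r m = ∑ w, t (w + 1) C(r, w) C(m, w + 1)`, and the summands of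
`(2r + 1)` times this sum minus `2m F r m` telescope, with certificate `2 w t w C(r, w) C(m, w)`.
-/

open Finset

def centralWeight (v : ℕ) : ℚ := 4 ^ v / v.centralBinom

lemma two_mul_add_one_mul_centralWeight_succ (v : ℕ) :
    (2 * v + 1) * centralWeight (v + 1) = 2 * (v + 1) * centralWeight v := by
  have hc : ((v + 1 : ℕ) : ℚ) * (v + 1).centralBinom = 2 * (2 * v + 1) * v.centralBinom := by
    exact_mod_cast Nat.succ_mul_centralBinom_succ v
  have h₀ : (v.centralBinom : ℚ) ≠ 0 := mod_cast v.centralBinom_ne_zero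
  have h₁ : ((v + 1).centralBinom : ℚ) ≠ 0 := mod_cast (v + 1).centralBinom_ne_zero
  unfold centralWeight
  field_simp
  push_cast at hc
  linear_combination (-2) * (4 : ℚ) ^ v * hc

lemma cast_choose_succ_mul {R : Type*} [Ring R] (m w : ℕ) :
    (m.choose (w + 1) : R) * (w + 1) = m.choose w * (m - w) := by
  rcases le_or_gt w m with h | h
  · have := congrArg (Nat.cast : ℕ → R) (Nat.choose_succ_right_eq m w)
    push_cast [Nat.cast_sub h] at this
    exact this
  · simp [Nat.choose_eq_zero_of_lt h, Nat.choose_eq_zero_of_lt (h.trans (Nat.lt_succ_self w))]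

lemma centralWeight_succ_mul_choose_succ (m w : ℕ) :
    (2 * w + 1) * centralWeight (w + 1) * m.choose (w + 1)
      = 2 * (m - w) * centralWeight w * m.choose w := by
  refine mul_right_cancel₀ (b := (w + 1 : ℚ)) (by positivity) ?_
  linear_combination (m.choose (w + 1) : ℚ) * (w + 1) * two_mul_add_one_mul_centralWeight_succ w
    + 2 * (w + 1) * centralWeight w * cast_choose_succ_mul (R := ℚ) m w

def binomTerm (r m v : ℕ) : ℚ := centralWeight v * r.choose v * m.choose v

def binomSum (r m : ℕ) : ℚ := ∑ v ∈ range (r + 1), binomTerm r m v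

lemma zeilberger_certificate (r m w : ℕ) :
    (2 * r + 1) * (centralWeight (w + 1) * r.choose w * m.choose (w + 1)) - 2 * m * binomTerm r m w
      = 2 * ((w + 1 : ℕ) * binomTerm r m (w + 1) - w * binomTerm r m w) := by
  unfold binomTerm
  push_cast
  linear_combination (r.choose w : ℚ) * centralWeight_succ_mul_choose_succ m w
    - 2 * centralWeight (w + 1) * m.choose (w + 1) * cast_choose_succ_mul (R := ℚ) r w

lemma binomTerm_self_succ (r m : ℕ) : binomTerm r m (r + 1) = 0 := by
  simp [binomTerm]

lemma two_mul_add_one_mul_sum_shifted (r m : ℕ) :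
    (2 * r + 1) * ∑ w ∈ range (r + 1), centralWeight (w + 1) * r.choose w * m.choose (w + 1)
      = 2 * m * binomSum r m := by
  rw [binomSum, mul_sum, mul_sum, ← sub_eq_zero, ← sum_sub_distrib]
  calc _ = ∑ w ∈ range (r + 1),
          2 * ((w + 1 : ℕ) * binomTerm r m (w + 1) - w * binomTerm r m w) :=
        sum_congr rfl fun w _ ↦ zeilberger_certificate r m w
    _ = 0 := by
      rw [← mul_sum, sum_range_sub (fun i ↦ (i : ℚ) * binomTerm r m i), binomTerm_self_succ]
      simp

lemma binomSum_succ_left (r m : ℕ) :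
    binomSum (r + 1) m = binomSum r m
      + ∑ w ∈ range (r + 1), centralWeight (w + 1) * r.choose w * m.choose (w + 1) := by
  have hpascal : ∀ w, binomTerm (r + 1) m (w + 1)
      = centralWeight (w + 1) * r.choose w * m.choose (w + 1) + binomTerm r m (w + 1) := by
    intro w
    simp only [binomTerm, Nat.choose_succ_succ, Nat.cast_add]
    ring
  have hshift :
      binomSum r m = ∑ w ∈ range (r + 1), binomTerm r m (w + 1) + binomTerm r m 0 := by
    rw [binomSum, ← add_zero (∑ v ∈ range (r + 1), _), ← binomTerm_self_succ r m,
      ← sum_range_succ, sum_range_succ']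
  rw [binomSum, sum_range_succ', sum_congr rfl fun w _ ↦ hpascal w, sum_add_distrib, hshift]
  simp only [binomTerm, Nat.choose_zero_right]
  ring

lemma binomSum_recurrence (r m : ℕ) :
    (2 * r + 1) * binomSum (r + 1) m = (2 * (r + m) + 1) * binomSum r m := by
  rw [binomSum_succ_left, mul_add, two_mul_add_one_mul_sum_shifted]
  ring

lemma choose_two_mul_div_choose_recurrence (n r : ℕ) :
    (2 * r + 1) * (((2 * n + 2).choose (2 * r + 2) : ℚ) / (n + 1).choose (r + 1))
      = (2 * n + 1) * (((2 * n).choose (2 * r) : ℚ) / n.choose r) := by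
  rcases le_or_gt r n with h | h
  · have hnum : ((2 * n + 2).choose (2 * r + 2) : ℚ) * (r + 1) * (2 * r + 1)
        = (n + 1) * (2 * n + 1) * (2 * n).choose (2 * r) := by
      have a₁ : ((2 * n + 1 : ℕ) : ℚ) * (2 * n).choose (2 * r)
          = (2 * n + 1).choose (2 * r + 1) * (2 * r + 1 : ℕ) := by
        exact_mod_cast Nat.add_one_mul_choose_eq (2 * n) (2 * r)
      have a₂ : ((2 * n + 2 : ℕ) : ℚ) * (2 * n + 1).choose (2 * r + 1)
          = (2 * n + 2).choose (2 * r + 2) * (2 * r + 2 : ℕ) := by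
        exact_mod_cast Nat.add_one_mul_choose_eq (2 * n + 1) (2 * r + 1)
      push_cast at a₁ a₂
      linear_combination (-1/2 : ℚ) * (2 * r + 1) * a₂ - (n + 1) * a₁
    have hden : ((n + 1).choose (r + 1) : ℚ) * (r + 1) = (n + 1) * n.choose r := by
      exact_mod_cast (Nat.add_one_mul_choose_eq n r).symm
    have h₀ : (n.choose r : ℚ) ≠ 0 := mod_cast (Nat.choose_pos h).ne'
    have h₁ : ((n + 1).choose (r + 1) : ℚ) ≠ 0 := mod_cast (Nat.choose_pos (by omega)).ne'
    field_simp
    refine mul_left_cancel₀ (show (r + 1 : ℚ) ≠ 0 by positivity) ?_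
    linear_combination (n.choose r : ℚ) * hnum - (2 * n + 1) * (2 * n).choose (2 * r) * hden
  · simp [Nat.choose_eq_zero_of_lt h, Nat.choose_eq_zero_of_lt (show 2 * n < 2 * r by omega),
      Nat.choose_eq_zero_of_lt (show 2 * n + 2 < 2 * r + 2 by omega)]

lemma binomSum_eq (r m : ℕ) :
    binomSum r m = ((2 * (r + m)).choose (2 * r) : ℚ) / (r + m).choose r := by
  induction r with
  | zero => simp [binomSum, binomTerm, centralWeight]
  | succ r ih =>
    refine mul_left_cancel₀ (show (2 * r + 1 : ℚ) ≠ 0 by positivity) ?_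
    have hshift : r + 1 + m = r + m + 1 := by omega
    rw [binomSum_recurrence, ih, hshift, mul_add 2 (r + m) 1, mul_add 2 r 1, mul_one,
      choose_two_mul_div_choose_recurrence]
    push_cast
    ring

theorem stmt_13 (r s : ℕ) (hrs : r ≤ s) :
    ∑ v ∈ Finset.range (r+1),
        ((4:ℚ)^v / ((2*v).choose v : ℚ)) * (r.choose v : ℚ) * ((s-r).choose v : ℚ)
      = ((2*s).choose (2*r) : ℚ) / (s.choose r : ℚ) := by
  have h := binomSum_eq r (s - r)
  rwa [Nat.add_sub_cancel' hrs] at h
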